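/- On ℝ⁴ with coordinates (x₁,x₂,x₃,x₄), the vector field U = e^{-2x₃}∂_{x₄} is a null Killing field for the metric g = (e^{-4x₂+4x₃} - 1)dx₁² + e^{-2x₂+2x₃}(dx₁dx₄ + dx₄dx₁) + dx₂² + dx₃² + 2x₄e^{-2x₂+2x₃}(dx₃dx₁ + dx₁dx₃). -/

import Mathlib

/-! Since `U = u ∂_{x₄}` with `u = e^{-2x₃}`, we have `∂_i U = -2 δ_{i,x₃} U`, so for any metric
`(L_U g)_{ij} = u (∂_{x₄} g_{ij} - 2 (δ_{i,x₃} g_{x₄ j} + δ_{j,x₃} g_{i x₄}))`.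
For this metric the only `x₄`-dependence is the term `2 x₄ e^{-2x₂+2x₃} dx₁dx₃`, whose
`x₄`-derivative is exactly balanced by `g_{x₄x₁} = e^{-2x₂+2x₃}`. Nullness is `g_{x₄x₄} = 0`. -/

open Matrix

/-- Partial derivative in the i-th coordinate direction on ℝ⁴. -/
noncomputable def pd (i : Fin 4) (f : (Fin 4 → ℝ) → ℝ) (x : Fin 4 → ℝ) : ℝ :=
  fderiv ℝ f x (Pi.single i 1)

/-- The non-reductive Gödel-type metric
g = (e^{-4x₂+4x₃}-1)dx₁² + e^{-2x₂+2x₃}(dx₁dx₄+dx₄dx₁) + dx₂² + dx₃²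
  + 2x₄e^{-2x₂+2x₃}(dx₃dx₁+dx₁dx₃), coordinates (x₁,x₂,x₃,x₄) = (p 0,...,p 3). -/
noncomputable def nonredG (p : Fin 4 → ℝ) : Matrix (Fin 4) (Fin 4) ℝ :=
  !![Real.exp (-4 * p 1 + 4 * p 2) - 1, 0,
       2 * p 3 * Real.exp (-2 * p 1 + 2 * p 2), Real.exp (-2 * p 1 + 2 * p 2);
     0, 1, 0, 0;
     2 * p 3 * Real.exp (-2 * p 1 + 2 * p 2), 0, 1, 0;
     Real.exp (-2 * p 1 + 2 * p 2), 0, 0, 0]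

/-- Coordinate Lie derivative of a metric along a vector field. -/
noncomputable def lieD (g : (Fin 4 → ℝ) → Matrix (Fin 4) (Fin 4) ℝ)
    (X : (Fin 4 → ℝ) → Fin 4 → ℝ) (p : Fin 4 → ℝ) (i j : Fin 4) : ℝ :=
  (∑ k, X p k * pd k (fun y => g y i j) p)
  + (∑ k, g p k j * pd i (fun y => X y k) p)
  + (∑ k, g p i k * pd j (fun y => X y k) p)

/-- The vector field U = e^{-2x₃}∂_{x₄}. -/
noncomputable def Unr : (Fin 4 → ℝ) → Fin 4 → ℝ := fun p =>
  ![0, 0, 0, Real.exp (-2 * p 2)]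

section pd

variable {f g : (Fin 4 → ℝ) → ℝ} {p : Fin 4 → ℝ}

@[simp] lemma pd_const (k : Fin 4) (c : ℝ) : pd k (fun _ => c) p = 0 := by
  simp [pd]

@[simp] lemma pd_apply (k m : Fin 4) : pd k (fun y => y m) p = (Pi.single k 1 : Fin 4 → ℝ) m := by
  simp [pd, fderiv_apply]

lemma pd_add (k : Fin 4) (hf : DifferentiableAt ℝ f p) (hg : DifferentiableAt ℝ g p) :
    pd k (fun y => f y + g y) p = pd k f p + pd k g p := by
  rw [pd, fderiv_fun_add hf hg]
  simp [pd]

lemma pd_sub (k : Fin 4) (hf : DifferentiableAt ℝ f p) (hg : DifferentiableAt ℝ g p) :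
    pd k (fun y => f y - g y) p = pd k f p - pd k g p := by
  rw [pd, fderiv_fun_sub hf hg]
  simp [pd]

lemma pd_mul (k : Fin 4) (hf : DifferentiableAt ℝ f p) (hg : DifferentiableAt ℝ g p) :
    pd k (fun y => f y * g y) p = pd k f p * g p + f p * pd k g p := by
  rw [pd, fderiv_fun_mul hf hg]
  simp [pd, add_comm, mul_comm]

lemma pd_neg (k : Fin 4) : pd k (fun y => -f y) p = -pd k f p := by
  rw [pd, fderiv_fun_neg]
  simp [pd]

lemma pd_const_mul (k : Fin 4) (c : ℝ) (hf : DifferentiableAt ℝ f p) :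
    pd k (fun y => c * f y) p = c * pd k f p := by
  rw [pd, fderiv_const_mul hf]
  simp [pd]

lemma pd_exp (k : Fin 4) (hf : DifferentiableAt ℝ f p) :
    pd k (fun y => Real.exp (f y)) p = Real.exp (f p) * pd k f p := by
  simp [pd, fderiv_exp hf]

end pd

lemma pd_Unr (i k : Fin 4) (p : Fin 4 → ℝ) :
    pd i (fun y => Unr y k) p = Unr p k * (-2 * (Pi.single i 1 : Fin 4 → ℝ) 2) := by
  fin_cases k <;> simp (disch := fun_prop) [Unr, pd_exp, pd_neg, pd_const_mul]

lemma lieD_Unr (g : (Fin 4 → ℝ) → Matrix (Fin 4) (Fin 4) ℝ) (p : Fin 4 → ℝ) (i j : Fin 4) :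
    lieD g Unr p i j = Unr p 3 * (pd 3 (fun y => g y i j) p
      - 2 * ((Pi.single i 1 : Fin 4 → ℝ) 2 * g p 3 j + (Pi.single j 1 : Fin 4 → ℝ) 2 * g p i 3)) := by
  simp only [lieD, pd_Unr, Fin.sum_univ_four]
  simp [Unr]
  ring

lemma pd_three_nonredG (p : Fin 4 → ℝ) (i j : Fin 4) :
    pd 3 (fun y => nonredG y i j) p =
      2 * ((Pi.single i 1 : Fin 4 → ℝ) 2 * nonredG p 3 j
        + (Pi.single j 1 : Fin 4 → ℝ) 2 * nonredG p i 3) := by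
  fin_cases i <;> fin_cases j <;>
    simp (disch := fun_prop) [nonredG, Pi.single_apply, pd_add, pd_sub, pd_mul, pd_exp, pd_neg]

/-- U = e^{-2x₃}∂_{x₄} is a null Killing field for the non-reductive
Gödel-type metric. -/
theorem nonred_null_killing :
    (∀ p i j, lieD nonredG Unr p i j = 0) ∧
    (∀ p : Fin 4 → ℝ, (∑ i, ∑ j, nonredG p i j * Unr p i * Unr p j) = 0) := by
  refine ⟨fun p i j => ?_, fun p => ?_⟩
  · rw [lieD_Unr, pd_three_nonredG, sub_self, mul_zero]
  · simp [Fin.sum_univ_four, nonredG, Unr]
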